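/- Let N ≥ 2 and let y ∈ ℝ^N with y_1 > … > y_{N−1} > y_N = 0 satisfy 4 Σ_{j ≠ i} 1/(y_i² − y_j²) = 1 for every i = 1,…,N−1. Then for each c > 0 the curve x(t) := √(t + c²) · y satisfies x(0) = c·y, takes values in the interior of C_N^D, and solves x'(t) = H^D(x(t)) for all t ≥ 0. -/

import Mathlib

/-!
`H^D` is homogeneous of degree `-1`, so the self-similar ansatz `x(t) = √(t + c²) • y` turns
`x' = H^D(x)` into `H^D(y) = y / 2`. Pairing the terms as `1/(a-b) + 1/(a+b) = 2a/(a²-b²)`, this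
is the stationarity equation `4 ∑ 1/(y_i² - y_j²) = 1` at every positive coordinate; at `y_N = 0`
both sides vanish because the terms cancel in pairs.
-/

open Finset

section DriftD

variable {ι : Type*} [Fintype ι] [DecidableEq ι]

/-- The vector field `H^D`, on plain functions `ι → ℝ`. -/
noncomputable def driftD (x : ι → ℝ) (i : ι) : ℝ :=
  ∑ j ∈ univ.erase i, (1 / (x i - x j) + 1 / (x i + x j))

theorem driftD_smul (s : ℝ) (x : ι → ℝ) (i : ι) : driftD (s • x) i = s⁻¹ * driftD x i := by
  simp only [driftD, mul_sum, Pi.smul_apply, smul_eq_mul, ← mul_sub, ← mul_add, one_div, mul_inv]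

theorem one_div_sub_add_one_div_add {K : Type*} [Field K] {a b : K}
    (h₁ : a - b ≠ 0) (h₂ : a + b ≠ 0) :
    1 / (a - b) + 1 / (a + b) = 2 * a * (1 / (a ^ 2 - b ^ 2)) := by
  have : a ^ 2 - b ^ 2 ≠ 0 := by rw [sq_sub_sq]; exact mul_ne_zero h₂ h₁
  field_simp
  ring

theorem driftD_apply_eq_half_of_sum_inv_sq_sub {x : ι → ℝ} {i : ι}
    (hsub : ∀ j ≠ i, x i - x j ≠ 0) (hadd : ∀ j ≠ i, x i + x j ≠ 0)
    (hstat : 4 * ∑ j ∈ univ.erase i, 1 / (x i ^ 2 - x j ^ 2) = 1) :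
    driftD x i = x i / 2 := by
  have hterm : ∀ j ∈ univ.erase i, 1 / (x i - x j) + 1 / (x i + x j)
      = 2 * x i * (1 / (x i ^ 2 - x j ^ 2)) := fun j hj =>
    one_div_sub_add_one_div_add (hsub j (ne_of_mem_erase hj)) (hadd j (ne_of_mem_erase hj))
  rw [driftD, sum_congr rfl hterm, ← mul_sum]
  linear_combination x i / 2 * hstat

theorem driftD_apply_of_eq_zero {x : ι → ℝ} {i : ι} (h : x i = 0) : driftD x i = 0 := by
  simp [driftD, h]

theorem driftD_eq_half_of_stationary {y : ι → ℝ} (hinj : Function.Injective y)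
    (hnonneg : ∀ i, 0 ≤ y i)
    (hstat : ∀ i, 0 < y i → 4 * ∑ j ∈ univ.erase i, 1 / (y i ^ 2 - y j ^ 2) = 1) (i : ι) :
    driftD y i = y i / 2 := by
  rcases (hnonneg i).eq_or_lt with hi | hi
  · rw [driftD_apply_of_eq_zero hi.symm, ← hi, zero_div]
  · exact driftD_apply_eq_half_of_sum_inv_sq_sub (fun j hj => sub_ne_zero.2 (hinj.ne hj.symm))
      (fun j _ => (add_pos_of_pos_of_nonneg hi (hnonneg j)).ne') (hstat i hi)

end DriftD

theorem hasDerivAt_sqrt_add_smul {E : Type*} [NormedAddCommGroup E] [NormedSpace ℝ E]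
    {H : E → E} {y : E} (hhom : ∀ s : ℝ, 0 < s → H (s • y) = s⁻¹ • H y)
    (hy : H y = (2 : ℝ)⁻¹ • y) {a t : ℝ} (ht : 0 < t + a) :
    HasDerivAt (fun u => √(u + a) • y) (H (√(t + a) • y)) t := by
  rw [hhom _ (Real.sqrt_pos.2 ht), hy, smul_smul, ← mul_inv, mul_comm, ← one_div]
  exact ((Real.hasDerivAt_sqrt ht.ne').comp_add_const t a).smul_const y

theorem injective_of_strictAnti_init_of_last_eq_zero {N : ℕ} {y : Fin N → ℝ}
    (hy : ∀ i j : Fin N, i < j → j.val + 1 < N → y j < y i)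
    (hylast : ∀ j : Fin N, N ≤ j.val + 1 → y j = 0)
    (hypos : ∀ i : Fin N, i.val + 1 < N → 0 < y i) : Function.Injective y := by
  suffices h : ∀ i j : Fin N, i < j → y j ≠ y i by
    intro i j hij
    by_contra hne
    rcases lt_or_gt_of_ne hne with hlt | hlt
    · exact h i j hlt hij.symm
    · exact h j i hlt hij
  intro i j hij
  have hi : i.val + 1 < N := by omega
  by_cases hj : j.val + 1 < N
  · exact (hy i j hij hj).ne
  · rw [hylast j (by omega)]; exact (hypos i hi).ne

/-- For `N ≥ 2`: if `y_1 > ⋯ > y_{N−1} > y_N = 0` satisfies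
`4 ∑_{j ≠ i} 1/(y_i² − y_j²) = 1` for every `i = 1, …, N−1`, then for each `c > 0` the
curve `x(t) = √(t + c²) · y` starts at `c·y`, stays in the interior
`{x : x_1 > ⋯ > x_{N−1} > |x_N|}` of `C_N^D` for `t ≥ 0`, and solves `x' = H^D(x)`. -/
theorem explicit_solution_D (N : ℕ) (hN : 2 ≤ N)
    (H : EuclideanSpace ℝ (Fin N) → EuclideanSpace ℝ (Fin N))
    (hH : ∀ x, ∀ i : Fin N,
      H x i = ∑ j ∈ Finset.univ.erase i, (1 / (x i - x j) + 1 / (x i + x j)))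
    (y : EuclideanSpace ℝ (Fin N))
    (hy : ∀ i j : Fin N, i < j → j.val + 1 < N → y j < y i)
    (hylast : y ⟨N - 1, by omega⟩ = 0)
    (hypos : ∀ i : Fin N, i.val + 1 < N → 0 < y i)
    (hstat : ∀ i : Fin N, i.val + 1 < N →
      4 * (∑ j ∈ Finset.univ.erase i, 1 / (y i ^ 2 - y j ^ 2)) = 1)
    (c : ℝ) (hc : 0 < c)
    (x : ℝ → EuclideanSpace ℝ (Fin N))
    (hx : ∀ t, x t = Real.sqrt (t + c ^ 2) • y) :
    x 0 = c • y
      ∧ (∀ t ≥ (0:ℝ), (∀ i j : Fin N, i < j → j.val + 1 < N → x t j < x t i)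
          ∧ |x t ⟨N - 1, by omega⟩| < x t ⟨N - 2, by omega⟩)
      ∧ (∀ t ≥ (0:ℝ), HasDerivAt x (H (x t)) t) := by
  have hytail : ∀ j : Fin N, N ≤ j.val + 1 → y j = 0 := fun j hj => by
    rw [← hylast, show j = ⟨N - 1, by omega⟩ from Fin.ext (by simp only; omega)]
  have hynonneg : ∀ i, 0 ≤ y i := fun i => by
    by_cases hi : i.val + 1 < N
    · exact (hypos i hi).le
    · exact (hytail i (by omega)).ge
  have hystat : ∀ i, 0 < y i → 4 * ∑ j ∈ univ.erase i, 1 / (y i ^ 2 - y j ^ 2) = 1 :=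
    fun i hi => hstat i (by by_contra h; exact hi.ne' (hytail i (by omega)))
  have hHy : H y = (2 : ℝ)⁻¹ • y := by
    ext i
    rw [hH, PiLp.smul_apply, smul_eq_mul, inv_mul_eq_div]
    exact driftD_eq_half_of_stationary
      (injective_of_strictAnti_init_of_last_eq_zero hy hytail hypos) hynonneg hystat i
  have hHhom : ∀ s : ℝ, 0 < s → H (s • y) = s⁻¹ • H y := fun s _ => by
    ext i
    rw [PiLp.smul_apply, hH, hH, smul_eq_mul]
    show driftD (s • y).ofLp i = s⁻¹ * driftD y.ofLp i
    rw [WithLp.ofLp_smul, driftD_smul]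
  have hscale : ∀ t ≥ (0 : ℝ), 0 < √(t + c ^ 2) := fun t _ => Real.sqrt_pos.2 (by positivity)
  refine ⟨by rw [hx, zero_add, Real.sqrt_sq hc.le], fun t ht => ⟨fun i j hij hj => ?_, ?_⟩,
    fun t ht => ?_⟩
  · simp only [hx, PiLp.smul_apply, smul_eq_mul]
    exact mul_lt_mul_of_pos_left (hy i j hij hj) (hscale t ht)
  · simp only [hx, PiLp.smul_apply, smul_eq_mul, hylast, mul_zero, abs_zero]
    exact mul_pos (hscale t ht) (hypos _ (by simp only; omega))
  · rw [hx t, show x = _ from funext hx]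
    exact hasDerivAt_sqrt_add_smul hHhom hHy (by positivity)
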